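/- Let (W,S) be a Coxeter system of type I₂(m) with m even, m ≥ 4: S = {s,t} and m_{s,t} = m. Then F = {{s}, {t}, S}, and the cactus group C(W,S) decomposes as the internal direct product of the subgroup generated by c_S (of order 2) and the subgroup generated by c_{{s}} and c_{{t}}; the latter is isomorphic to ℤ/2ℤ ∗ ℤ/2ℤ, so C(W,S) ≅ ℤ/2ℤ × (ℤ/2ℤ ∗ ℤ/2ℤ). -/

import Mathlib

/-!  Common framework: cactus groups of Coxeter systems. -/

namespace CactusFormal

open scoped Classical

variable {B : Type*} {W : Type*} [Group W] {M : CoxeterMatrix B}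

/-- A subset `X` of `S` is irreducible (w.r.t. the Coxeter matrix `M`) if it admits no
partition into two nonempty parts that pairwise commute (label `2`). -/
def IsIrred (M : CoxeterMatrix B) (X : Set B) : Prop :=
  ¬ ∃ X₁ X₂ : Set B, X₁.Nonempty ∧ X₂.Nonempty ∧ Disjoint X₁ X₂ ∧ X₁ ∪ X₂ = X ∧
      ∀ x ∈ X₁, ∀ y ∈ X₂, M x y = 2

/-- The standard parabolic subgroup `W_X`. -/
def parabolic (cs : CoxeterSystem M W) (X : Set B) : Subgroup W :=
  Subgroup.closure (cs.simple '' X)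

/-- `w` is the longest element `ω_X`: a nontrivial element of `W_X` permuting
the simple reflections indexed by `X` by conjugation. -/
def IsOmega (cs : CoxeterSystem M W) (X : Set B) (w : W) : Prop :=
  w ∈ parabolic cs X ∧ w ≠ 1 ∧
    ∀ x ∈ X, ∃ x' ∈ X, w * cs.simple x * w⁻¹ = cs.simple x'

/-- The element `ω_X` (junk value `1` if it does not exist). -/
noncomputable def omega (cs : CoxeterSystem M W) (X : Set B) : W :=
  if h : ∃ w, IsOmega cs X w then h.choose else 1

/-- The family `F` of nonempty subsets `X` of `S` with `W_X` finite and irreducible. -/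
def F (cs : CoxeterSystem M W) : Set (Set B) :=
  {X | X.Nonempty ∧ (parabolic cs X : Set W).Finite ∧ IsIrred M X}

/-- The subset `ω_X Y ω_X⁻¹` of `S`, i.e. the set of indices whose simple reflection is
the conjugate by `ω_X` of a simple reflection indexed by `Y`. -/
def omegaSet (cs : CoxeterSystem M W) (X Y : Set B) : Set B :=
  {z | ∃ y ∈ Y, cs.simple z = omega cs X * cs.simple y * (omega cs X)⁻¹}

/-- `Ω(X)`: the elements `Y ∈ F`, `Y ≠ X`, with `ω_X Y ω_X ⊆ S`. -/
def Omega (cs : CoxeterSystem M W) (X : Set B) : Set (Set B) :=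
  {Y | Y ∈ F cs ∧ Y ≠ X ∧
    ∀ y ∈ Y, ∃ z, omega cs X * cs.simple y * (omega cs X)⁻¹ = cs.simple z}

/-- `Ω₀(X)`: the elements of `F` properly contained in `X`. -/
def Omega0 (cs : CoxeterSystem M W) (X : Set B) : Set (Set B) :=
  {Y | Y ∈ F cs ∧ Y ⊂ X}

/-- `Ω_∞(X)`: the elements `Y` of `F` with `X ∪ Y` not irreducible. -/
def OmegaInf (cs : CoxeterSystem M W) (X : Set B) : Set (Set B) :=
  {Y | Y ∈ F cs ∧ ¬ IsIrred M (X ∪ Y)}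

/-- The defining relators of the cactus group:
(R1) `c_X² = 1`; (R2) `c_X c_Y = c_{ω_X(Y)} c_X` for `Y ∈ Ω₀(X)`;
(R3) `c_X c_Y = c_Y c_X` for `Y ∈ Ω_∞(X)`. -/
def cactusRels (cs : CoxeterSystem M W) : Set (FreeGroup (F cs)) :=
  {r | (∃ X : F cs, r = .of X * .of X) ∨
    (∃ X Y Z : F cs, (Y : Set B) ∈ Omega0 cs X ∧ (Z : Set B) = omegaSet cs X Y ∧
      r = .of X * .of Y * (.of Z * .of X)⁻¹) ∨
    (∃ X Y : F cs, (Y : Set B) ∈ OmegaInf cs X ∧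
      r = .of X * .of Y * (.of Y * .of X)⁻¹)}

/-- The cactus group `C(W,S)`. -/
abbrev Cactus (cs : CoxeterSystem M W) := PresentedGroup (cactusRels cs)

/-- The generator `c_X` of the cactus group, for `X ∈ F`. -/
def gen (cs : CoxeterSystem M W) (X : F cs) : Cactus cs := PresentedGroup.of X

/-- The relation `≡₀` on `F`: `Y ≡₀ Z` iff `Z = ω_X Y ω_X` for some `X ∈ F`. -/
def equivZero (cs : CoxeterSystem M W) (Y Z : Set B) : Prop :=
  Y ∈ F cs ∧ Z ∈ F cs ∧ ∃ X ∈ F cs, Z = omegaSet cs X Y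

/-- The relation `≡`: the reflexive-transitive closure of `≡₀`. -/
def cEquiv (cs : CoxeterSystem M W) : Set B → Set B → Prop :=
  Relation.ReflTransGen (equivZero cs)

/-- The set of `≡`-equivalence classes on `F`. -/
def classes (cs : CoxeterSystem M W) :=
  Quot (fun X Y : F cs => cEquiv cs X Y)

/-- `m`: the number of `≡`-equivalence classes on `F`. -/
noncomputable def numClasses (cs : CoxeterSystem M W) : ℕ := Nat.card (classes cs)

/-- `Λ` is a transversal for `≡`: it contains exactly one element of each class. -/
def IsTransversal (cs : CoxeterSystem M W) (Λ : Set (Set B)) : Prop :=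
  Λ ⊆ F cs ∧ ∀ X ∈ F cs, ∃! Y, Y ∈ Λ ∧ cEquiv cs X Y

/-- A section `(Λ, Ψ)` for `(W,S)`, writing `Ψ X = (X̄, X̊)`. -/
structure IsSection (cs : CoxeterSystem M W) (Λ : Set (Set B))
    (Ψ : Set B → Set B × Set B) : Prop where
  subset : Λ ⊆ F cs
  eq_of_mem : ∀ X ∈ Λ, Ψ X = (X, X)
  bar_mem : ∀ X ∈ F cs, (Ψ X).1 ∈ Λ
  ring_mem : ∀ X ∈ F cs, (Ψ X).2 ∈ Λ
  ring_subset : ∀ X ∈ F cs, (Ψ X).2 ⊆ (Ψ X).1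
  omega_bar_ring : ∀ X ∈ F cs, omegaSet cs (Ψ X).1 (Ψ X).2 = X
  reducible_pairs : ∀ Y ∈ F cs, ∀ Z ∈ F cs, ¬ IsIrred M (Y ∪ Z) →
    ∃ X ∈ Λ, Y ∈ Omega cs X ∧ Z ∈ Omega cs X ∧
      (omegaSet cs X Y ∈ Λ ∨ omegaSet cs X Z ∈ Λ)

/-- `Λ` is a cross section with section map `Ψ`: additionally, for every `X ∈ F`,
`Ψ X` is the unique pair `(Y, Z) ∈ Λ × Λ` with `ω_Y(Z) = X`
(where `ω_Y(Z)` is defined for `Z ∈ Ω(Y) ∪ {Y}`). -/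
def IsCrossSection (cs : CoxeterSystem M W) (Λ : Set (Set B))
    (Ψ : Set B → Set B × Set B) : Prop :=
  IsSection cs Λ Ψ ∧ ∀ X ∈ F cs, ∀ Y Z : Set B,
    (Y ∈ Λ ∧ Z ∈ Λ ∧ (Z ∈ Omega cs Y ∨ Z = Y) ∧ omegaSet cs Y Z = X) ↔ Ψ X = (Y, Z)


/-! ### Auxiliary development for type `I₂(m)`, `m` even, `m ≥ 4` -/

section I2Aux

variable {W' : Type*} [Group W'] {M' : CoxeterMatrix (Fin 2)}

private lemma aux_invol : ∀ x : Multiplicative (ZMod 2 × ZMod 2), x * x = 1 := by decide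

private lemma fin2_cases : ∀ k : Fin 2, k = 0 ∨ k = 1 := by decide

private lemma exists_sgn (cs : CoxeterSystem M' W') (m : ℕ) (hm : M' 0 1 = m) (hme : Even m) :
    ∃ σ : W' →* Multiplicative (ZMod 2 × ZMod 2),
      σ (cs.simple 0) = Multiplicative.ofAdd (1, 0) ∧
      σ (cs.simple 1) = Multiplicative.ofAdd (0, 1) := by
  set f : Fin 2 → Multiplicative (ZMod 2 × ZMod 2) :=
    fun i => if i = 0 then Multiplicative.ofAdd (1, 0) else Multiplicative.ofAdd (0, 1) with hf
  have hlift : CoxeterMatrix.IsLiftable M' f := by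
    intro i j
    rcases eq_or_ne i j with rfl | hij
    · rw [M'.diagonal, pow_one, aux_invol]
    · have hMij : M' i j = m := by
        rcases fin2_cases i with rfl | rfl <;> rcases fin2_cases j with rfl | rfl
        · exact absurd rfl hij
        · exact hm
        · rw [← hm]; exact M'.symmetric 1 0
        · exact absurd rfl hij
      obtain ⟨k, hk⟩ := hme
      rw [hMij, hk, ← two_mul, pow_mul, pow_two, aux_invol, one_pow]
  refine ⟨cs.lift ⟨f, hlift⟩, ?_, ?_⟩ <;> rw [CoxeterSystem.lift_apply_simple] <;> simp [hf]

/-- Conjugate simple reflections have equal indices (for `m` even). -/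
private lemma conj_simple_eq (cs : CoxeterSystem M' W') (m : ℕ) (hm : M' 0 1 = m)
    (hme : Even m) (w : W') (i j : Fin 2) (h : w * cs.simple i * w⁻¹ = cs.simple j) :
    i = j := by
  obtain ⟨σ, h0, h1⟩ := exists_sgn cs m hm hme
  have hσ : σ (cs.simple i) = σ (cs.simple j) := by
    have := congrArg σ h
    rwa [map_mul, map_mul, map_inv, mul_comm, inv_mul_cancel_left] at this
  rcases fin2_cases i with rfl | rfl <;> rcases fin2_cases j with rfl | rfl <;>
    first
      | rfl
      | (rw [h0, h1] at hσ; exact absurd hσ (by decide))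
      | (rw [h0, h1] at hσ; exact absurd hσ.symm (by decide))

private lemma simple_inj (cs : CoxeterSystem M' W') (m : ℕ) (hm : M' 0 1 = m)
    (hme : Even m) {i j : Fin 2} (h : cs.simple i = cs.simple j) : i = j := by
  apply conj_simple_eq cs m hm hme 1
  rw [one_mul, inv_one, mul_one, h]

private lemma exists_delta (cs : CoxeterSystem M' W') (m : ℕ) (hm : M' 0 1 = m) (hm4 : 4 ≤ m) :
    ∃ δ : W' →* DihedralGroup m,
      δ (cs.simple 0) = DihedralGroup.sr 0 ∧ δ (cs.simple 1) = DihedralGroup.sr 1 := by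
  set f : Fin 2 → DihedralGroup m := fun i => DihedralGroup.sr (if i = 0 then 0 else 1) with hf
  have hlift : CoxeterMatrix.IsLiftable M' f := by
    intro i j
    rcases eq_or_ne i j with rfl | hij
    · rw [M'.diagonal, pow_one, DihedralGroup.sr_mul_self]
    · have hMij : M' i j = m := by
        rcases fin2_cases i with rfl | rfl <;> rcases fin2_cases j with rfl | rfl
        · exact absurd rfl hij
        · exact hm
        · rw [← hm]; exact M'.symmetric 1 0
        · exact absurd rfl hij
      have : NeZero m := ⟨by omega⟩
      have key : ∀ a b : ZMod m, (DihedralGroup.sr a * DihedralGroup.sr b) ^ m = 1 := by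
        intro a b
        rw [DihedralGroup.sr_mul_sr]
        have h1 : (DihedralGroup.r (b - a) : DihedralGroup m)
            = (DihedralGroup.r 1) ^ (b - a).val := by
          rw [DihedralGroup.r_one_pow, ZMod.natCast_val, ZMod.cast_id]
        have h2 : (DihedralGroup.r 1 : DihedralGroup m) ^ m = 1 := by
          rw [DihedralGroup.r_one_pow, ZMod.natCast_self, ← DihedralGroup.one_def]
        rw [h1, ← pow_mul, mul_comm, pow_mul, h2, one_pow]
      rw [hMij]; exact key _ _
  refine ⟨cs.lift ⟨f, hlift⟩, ?_, ?_⟩ <;> rw [CoxeterSystem.lift_apply_simple] <;> simp [hf]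

private lemma orderOf_u (cs : CoxeterSystem M' W') (m : ℕ) (hm : M' 0 1 = m) (hm4 : 4 ≤ m) :
    orderOf (cs.simple 0 * cs.simple 1) = m := by
  obtain ⟨δ, hδ0, hδ1⟩ := exists_delta cs m hm hm4
  have h1 : orderOf (cs.simple 0 * cs.simple 1) ∣ m := by
    apply orderOf_dvd_of_pow_eq_one
    rw [← hm]; exact cs.simple_mul_simple_pow 0 1
  have h2 : m ∣ orderOf (cs.simple 0 * cs.simple 1) := by
    have := orderOf_map_dvd δ (cs.simple 0 * cs.simple 1)
    rwa [map_mul, hδ0, hδ1, DihedralGroup.sr_mul_sr, sub_zero,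
      DihedralGroup.orderOf_r_one] at this
  exact Nat.dvd_antisymm h1 h2

private lemma finite_W (cs : CoxeterSystem M' W') (m : ℕ) (hm : M' 0 1 = m) (hm4 : 4 ≤ m) :
    Finite W' := by
  set u := cs.simple 0 * cs.simple 1 with hu
  have hfin : IsOfFinOrder u := by
    rw [← orderOf_pos_iff, orderOf_u cs m hm hm4]; omega
  set Hs : Set W' := (Subgroup.zpowers u : Set W') with hHs
  have hcover : ∀ w : W', w ∈ Hs ∪ (fun x => cs.simple 0 * x) '' Hs := by
    intro w
    induction w using cs.simple_induction_left with
    | one => exact Or.inl ⟨0, by simp⟩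
    | mul_simple_left w i ih =>
      rcases ih with ⟨k, hk⟩ | ⟨x, ⟨k, hkx⟩, hx⟩
      · rcases fin2_cases i with rfl | rfl
        · exact Or.inr ⟨w, ⟨k, hk⟩, rfl⟩
        · refine Or.inr ⟨u ^ (k + 1), ⟨k + 1, rfl⟩, ?_⟩
          simp only at hk ⊢
          have h1 : u ^ (k + 1) = u * u ^ k := by rw [add_comm, zpow_add, zpow_one]
          rw [h1, ← hk, hu]
          simp [mul_assoc, cs.simple_mul_simple_cancel_left]
      · simp only at hkx; subst hkx; rw [← hx]
        rcases fin2_cases i with rfl | rfl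
        · exact Or.inl ⟨k, by rw [cs.simple_mul_simple_cancel_left]⟩
        · refine Or.inl ⟨k - 1, ?_⟩
          simp only
          have h1 : u ^ (k - 1) = u⁻¹ * u ^ k := by
            rw [sub_eq_add_neg, add_comm, zpow_add, zpow_neg_one]
          have hui : u⁻¹ = cs.simple 1 * cs.simple 0 := by
            rw [hu, mul_inv_rev, cs.inv_simple, cs.inv_simple]
          rw [h1, hui, mul_assoc]
  have hfin1 : Hs.Finite := finite_zpowers.mpr hfin
  have : (Set.univ : Set W').Finite := by
    apply Set.Finite.subset (hfin1.union (hfin1.image _))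
    intro w _; exact hcover w
  exact Set.finite_univ_iff.mp this

/-- Every subset of `Fin 2` is irreducible when `M 0 1 = m ≥ 4`. -/
private lemma isIrred_all (m : ℕ) (hm : M' 0 1 = m) (hm4 : 4 ≤ m) (X : Set (Fin 2)) :
    IsIrred M' X := by
  rintro ⟨X1, X2, ⟨x, hx⟩, ⟨y, hy⟩, hdisj, -, hcomm⟩
  have hxy : x ≠ y := fun h => Set.disjoint_left.mp hdisj hx (h ▸ hy)
  have := hcomm x hx y hy
  rcases fin2_cases x with rfl | rfl <;> rcases fin2_cases y with rfl | rfl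
  · exact hxy rfl
  · rw [hm] at this; omega
  · rw [M'.symmetric 1 0, hm] at this; omega
  · exact hxy rfl

private lemma set_fin2 (X : Set (Fin 2)) :
    X = ∅ ∨ X = {0} ∨ X = {1} ∨ X = Set.univ := by
  by_cases h0 : (0 : Fin 2) ∈ X <;> by_cases h1 : (1 : Fin 2) ∈ X
  · right; right; right
    ext x; simp only [Set.mem_univ, iff_true]
    rcases fin2_cases x with rfl | rfl <;> assumption
  · right; left
    ext x
    rcases fin2_cases x with rfl | rfl <;> simp_all
  · right; right; left
    ext x
    rcases fin2_cases x with rfl | rfl <;> simp_all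
  · left
    ext x
    rcases fin2_cases x with rfl | rfl <;> simp_all

private lemma F_eq_aux (cs : CoxeterSystem M' W') (m : ℕ) (hm : M' 0 1 = m) (hm4 : 4 ≤ m) :
    F cs = {{0}, {1}, (Set.univ : Set (Fin 2))} := by
  have hW : Finite W' := finite_W cs m hm hm4
  ext X
  constructor
  · rintro ⟨hne, -, -⟩
    rcases set_fin2 X with rfl | rfl | rfl | rfl
    · exact absurd hne (by simp)
    · exact Set.mem_insert _ _
    · exact Set.mem_insert_of_mem _ (Set.mem_insert _ _)
    · exact Set.mem_insert_of_mem _ (Set.mem_insert_of_mem _ rfl)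
  · intro hX
    rcases hX with rfl | rfl | rfl
    · exact ⟨⟨0, rfl⟩, Set.toFinite _, isIrred_all m hm hm4 _⟩
    · exact ⟨⟨1, rfl⟩, Set.toFinite _, isIrred_all m hm hm4 _⟩
    · exact ⟨⟨0, trivial⟩, Set.toFinite _, isIrred_all m hm hm4 _⟩

private lemma F_cases (cs : CoxeterSystem M' W') (m : ℕ) (hm : M' 0 1 = m) (hm4 : 4 ≤ m)
    (X : F cs) : X.val = {0} ∨ X.val = {1} ∨ X.val = Set.univ := by
  have hmem := (Set.ext_iff.mp (F_eq_aux cs m hm hm4) X.val).mp X.2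
  simpa only [Set.mem_insert_iff, Set.mem_singleton_iff] using hmem

/-- The longest element exists for `X = univ`. -/
private lemma exists_isOmega_univ (cs : CoxeterSystem M' W') (m : ℕ) (hm : M' 0 1 = m)
    (hme : Even m) (hm4 : 4 ≤ m) :
    ∃ w, IsOmega cs (Set.univ : Set (Fin 2)) w := by
  obtain ⟨k, hk⟩ := hme
  set u := cs.simple 0 * cs.simple 1 with hu
  set z := u ^ (m / 2) with hz
  have hou : orderOf u = m := orderOf_u cs m hm hm4
  have hum : u ^ m = 1 := by rw [← hou]; exact pow_orderOf_eq_one u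
  have hmm : m / 2 + m / 2 = m := by omega
  have hz2 : z * z = 1 := by rw [hz, ← pow_add, hmm, hum]
  have hzinv : z⁻¹ = z := by rw [eq_comm, eq_inv_iff_mul_eq_one, hz2]
  have hconj : ∀ i : Fin 2, cs.simple i * u * (cs.simple i)⁻¹ = u⁻¹ := by
    intro i
    rcases fin2_cases i with rfl | rfl <;>
      simp [hu, mul_inv_rev, cs.inv_simple, mul_assoc, cs.simple_mul_simple_self,
        cs.simple_mul_simple_cancel_left]
  have hcz : ∀ i : Fin 2, cs.simple i * z * (cs.simple i)⁻¹ = z := by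
    intro i
    rw [hz, ← conj_pow, hconj i, inv_pow, ← hz, hzinv]
  have hcommz : ∀ i : Fin 2, cs.simple i * z = z * cs.simple i := fun i =>
    mul_inv_eq_iff_eq_mul.mp (hcz i)
  have hzne : z ≠ 1 := by
    intro h
    have hdvd := orderOf_dvd_of_pow_eq_one (hz ▸ h)
    rw [hou] at hdvd
    have := Nat.le_of_dvd (by omega) hdvd
    omega
  refine ⟨z, ?_, hzne, ?_⟩
  · have hpar : parabolic cs (Set.univ : Set (Fin 2)) = ⊤ := by
      rw [parabolic, Set.image_univ, cs.subgroup_closure_range_simple]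
    rw [hpar]; trivial
  · intro i _
    refine ⟨i, trivial, ?_⟩
    rw [show z * cs.simple i = cs.simple i * z from (hcommz i).symm, mul_inv_cancel_right]

private lemma omega_univ_conj (cs : CoxeterSystem M' W') (m : ℕ) (hm : M' 0 1 = m)
    (hme : Even m) (hm4 : 4 ≤ m) (i : Fin 2) :
    omega cs (Set.univ : Set (Fin 2)) * cs.simple i * (omega cs (Set.univ : Set (Fin 2)))⁻¹
      = cs.simple i := by
  have hex := exists_isOmega_univ cs m hm hme hm4
  have hω : IsOmega cs (Set.univ : Set (Fin 2)) (omega cs Set.univ) := by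
    rw [omega, dif_pos hex]
    exact hex.choose_spec
  obtain ⟨-, -, h3⟩ := hω
  obtain ⟨j, -, hj⟩ := h3 i trivial
  have := conj_simple_eq cs m hm hme _ i j hj
  rw [hj, ← this]

private lemma omegaSet_univ (cs : CoxeterSystem M' W') (m : ℕ) (hm : M' 0 1 = m)
    (hme : Even m) (hm4 : 4 ≤ m) (Y : Set (Fin 2)) :
    omegaSet cs (Set.univ : Set (Fin 2)) Y = Y := by
  ext i
  simp only [omegaSet, Set.mem_setOf_eq]
  constructor
  · rintro ⟨y, hy, hiy⟩
    rw [omega_univ_conj cs m hm hme hm4] at hiy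
    rwa [simple_inj cs m hm hme hiy]
  · intro hi
    exact ⟨i, hi, by rw [omega_univ_conj cs m hm hme hm4]⟩

private lemma omega0_cases (cs : CoxeterSystem M' W') (m : ℕ) (hm : M' 0 1 = m)
    (hm4 : 4 ≤ m) {X Y : Set (Fin 2)} (hY : Y ∈ Omega0 cs X) :
    X = Set.univ ∧ (Y = {0} ∨ Y = {1}) := by
  obtain ⟨hYF, hss⟩ := hY
  have hYne : Y.Nonempty := hYF.1
  have hsub := hss.subset
  have hne := hss.ne
  rcases set_fin2 X with rfl | rfl | rfl | rfl
  · obtain ⟨y, hy⟩ := hYne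
    exact absurd (hsub hy) (Set.notMem_empty y)
  · exfalso
    rcases set_fin2 Y with rfl | rfl | rfl | rfl
    · exact absurd rfl (Set.nonempty_iff_ne_empty.mp hYne)
    · exact hne rfl
    · have h1 : (1 : Fin 2) ∈ ({0} : Set (Fin 2)) := hsub rfl
      rw [Set.mem_singleton_iff] at h1
      exact absurd h1 (by decide)
    · have h1 : (1 : Fin 2) ∈ ({0} : Set (Fin 2)) := hsub (Set.mem_univ 1)
      rw [Set.mem_singleton_iff] at h1
      exact absurd h1 (by decide)
  · exfalso
    rcases set_fin2 Y with rfl | rfl | rfl | rfl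
    · exact absurd rfl (Set.nonempty_iff_ne_empty.mp hYne)
    · have h1 : (0 : Fin 2) ∈ ({1} : Set (Fin 2)) := hsub rfl
      rw [Set.mem_singleton_iff] at h1
      exact absurd h1 (by decide)
    · exact hne rfl
    · have h1 : (0 : Fin 2) ∈ ({1} : Set (Fin 2)) := hsub (Set.mem_univ 0)
      rw [Set.mem_singleton_iff] at h1
      exact absurd h1 (by decide)
  · rcases set_fin2 Y with rfl | rfl | rfl | rfl
    · exact absurd rfl (Set.nonempty_iff_ne_empty.mp hYne)
    · exact ⟨rfl, Or.inl rfl⟩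
    · exact ⟨rfl, Or.inr rfl⟩
    · exact absurd rfl hne

private lemma omegaInf_empty (cs : CoxeterSystem M' W') (m : ℕ) (hm : M' 0 1 = m)
    (hm4 : 4 ≤ m) {X Y : Set (Fin 2)} (hY : Y ∈ OmegaInf cs X) : False :=
  hY.2 (isIrred_all m hm hm4 _)

end I2Aux

/-! ### The target group and the equivalence -/

section CactusI2

variable {W' : Type*} [Group W'] {M' : CoxeterMatrix (Fin 2)}

private abbrev A2 : Type := Multiplicative (ZMod 2)
private abbrev CP : Type := Monoid.Coprod A2 A2
private abbrev TT : Type := A2 × CP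

private def gg : A2 := Multiplicative.ofAdd 1

private lemma a2_cases : ∀ x : A2, x = 1 ∨ x = gg := by decide
private lemma gg_ne_one : gg ≠ 1 := by decide
private lemma gg_mul_gg : gg * gg = 1 := by decide

/-- The homomorphism from `ℤ/2` to a group sending the generator to a given involution. -/
private noncomputable def homOfInvol {G : Type*} [Group G] (x : G) (hx : x * x = 1) :
    A2 →* G :=
  AddMonoidHom.toMultiplicativeLeft
    (ZMod.lift 2 ⟨zmultiplesHom (Additive G) (Additive.ofMul x), by
      simp [two_zsmul, ← ofMul_mul, hx]⟩)

private lemma homOfInvol_apply {G : Type*} [Group G] (x : G) (hx : x * x = 1) :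
    homOfInvol x hx gg = x := by
  have h1 : ((1 : ℤ) : ZMod 2) = Multiplicative.toAdd gg := by decide
  simp only [homOfInvol, AddMonoidHom.coe_toMultiplicativeLeft, Function.comp_apply, ← h1,
    ZMod.lift_coe, zmultiplesHom_apply, one_zsmul, toMul_ofMul]

private lemma central_TT (p : TT) : ((gg, 1) : TT) * p = p * ((gg, 1) : TT) := by
  rw [Prod.ext_iff]
  exact ⟨mul_comm _ _, (one_mul p.2).trans (mul_one p.2).symm⟩

private lemma set0_ne_univ : ({0} : Set (Fin 2)) ≠ Set.univ := by
  intro h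
  have h1 : (1 : Fin 2) ∈ ({0} : Set (Fin 2)) := h ▸ Set.mem_univ 1
  rw [Set.mem_singleton_iff] at h1
  exact absurd h1 (by decide)

private lemma set1_ne_univ : ({1} : Set (Fin 2)) ≠ Set.univ := by
  intro h
  have h1 : (0 : Fin 2) ∈ ({1} : Set (Fin 2)) := h ▸ Set.mem_univ 0
  rw [Set.mem_singleton_iff] at h1
  exact absurd h1 (by decide)

private lemma set1_ne_set0 : ({1} : Set (Fin 2)) ≠ {0} := by
  intro h
  have h1 : (1 : Fin 2) ∈ ({0} : Set (Fin 2)) := h ▸ Set.mem_singleton 1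
  rw [Set.mem_singleton_iff] at h1
  exact absurd h1 (by decide)

/-- The images of the generators in the target group. -/
private noncomputable def fmap (cs : CoxeterSystem M' W') : F cs → TT := fun X =>
  if X.val = Set.univ then (gg, 1)
  else if X.val = {0} then (1, Monoid.Coprod.inl gg) else (1, Monoid.Coprod.inr gg)

private lemma fmap_univ (cs : CoxeterSystem M' W') (X : F cs) (h : X.val = Set.univ) :
    fmap cs X = (gg, 1) := by rw [fmap, if_pos h]

private lemma fmap_zero (cs : CoxeterSystem M' W') (X : F cs) (h : X.val = {0}) :
    fmap cs X = (1, Monoid.Coprod.inl gg) := by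
  rw [fmap, if_neg (h ▸ set0_ne_univ), if_pos h]

private lemma fmap_one (cs : CoxeterSystem M' W') (X : F cs) (h : X.val = {1}) :
    fmap cs X = (1, Monoid.Coprod.inr gg) := by
  rw [fmap, if_neg (h ▸ set1_ne_univ), if_neg (h ▸ set1_ne_set0)]

private lemma fmap_invol (cs : CoxeterSystem M' W') (m : ℕ) (hm : M' 0 1 = m) (hm4 : 4 ≤ m)
    (X : F cs) : fmap cs X * fmap cs X = 1 := by
  rcases F_cases cs m hm hm4 X with h | h | h
  · rw [fmap_zero cs X h, Prod.ext_iff]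
    constructor
    · exact one_mul 1
    · show Monoid.Coprod.inl gg * Monoid.Coprod.inl gg = 1
      rw [← map_mul, gg_mul_gg, map_one]
  · rw [fmap_one cs X h, Prod.ext_iff]
    constructor
    · exact one_mul 1
    · show Monoid.Coprod.inr gg * Monoid.Coprod.inr gg = 1
      rw [← map_mul, gg_mul_gg, map_one]
  · rw [fmap_univ cs X h, Prod.ext_iff]
    exact ⟨gg_mul_gg, one_mul 1⟩

private lemma lift_rels (cs : CoxeterSystem M' W') (m : ℕ) (hm : M' 0 1 = m)
    (hme : Even m) (hm4 : 4 ≤ m) :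
    ∀ r ∈ cactusRels cs, FreeGroup.lift (fmap cs) r = 1 := by
  rintro r (⟨X, rfl⟩ | ⟨X, Y, Z, hY, hZ, rfl⟩ | ⟨X, Y, hY, rfl⟩)
  · rw [map_mul, FreeGroup.lift_apply_of, fmap_invol cs m hm hm4]
  · obtain ⟨hXuniv, hY01⟩ := omega0_cases cs m hm hm4 hY
    have hZY : Z = Y := Subtype.ext (by rw [hZ, hXuniv, omegaSet_univ cs m hm hme hm4])
    subst hZY
    simp only [map_mul, map_inv, FreeGroup.lift_apply_of]
    rw [fmap_univ cs X hXuniv, mul_inv_eq_one]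
    exact central_TT _
  · exact absurd hY (fun h => omegaInf_empty cs m hm hm4 h)

private lemma rel_one {α : Type*} {rels : Set (FreeGroup α)} {r : FreeGroup α} (hr : r ∈ rels) :
    PresentedGroup.mk rels r = 1 :=
  (QuotientGroup.eq_one_iff r).mpr (Subgroup.subset_normalClosure hr)

private lemma gen_sq (cs : CoxeterSystem M' W') (X : F cs) : gen cs X * gen cs X = 1 := by
  have h := rel_one (rels := cactusRels cs) (Or.inl ⟨X, rfl⟩)
  rw [map_mul] at h
  exact h

private lemma genS_comm_gen (cs : CoxeterSystem M' W') (m : ℕ) (hm : M' 0 1 = m)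
    (hme : Even m) (hm4 : 4 ≤ m) (hS : (Set.univ : Set (Fin 2)) ∈ F cs)
    (Y : F cs) (hY01 : Y.val = {0} ∨ Y.val = {1}) :
    gen cs ⟨Set.univ, hS⟩ * gen cs Y = gen cs Y * gen cs ⟨Set.univ, hS⟩ := by
  have hne : Y.val ≠ Set.univ := by
    rcases hY01 with h | h
    · exact h ▸ set0_ne_univ
    · exact h ▸ set1_ne_univ
  have hmem : Y.val ∈ Omega0 cs (Set.univ : Set (Fin 2)) :=
    ⟨Y.2, Set.ssubset_univ_iff.mpr hne⟩
  have hr : (.of ⟨Set.univ, hS⟩ * .of Y * (.of Y * .of ⟨Set.univ, hS⟩)⁻¹ :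
      FreeGroup (F cs)) ∈ cactusRels cs :=
    Or.inr (Or.inl ⟨⟨Set.univ, hS⟩, Y, Y, hmem,
      (omegaSet_univ cs m hm hme hm4 _).symm, rfl⟩)
  have h := rel_one hr
  rw [map_mul, map_inv, map_mul, mul_inv_eq_one] at h
  exact h

private lemma genS_central (cs : CoxeterSystem M' W') (m : ℕ) (hm : M' 0 1 = m)
    (hme : Even m) (hm4 : 4 ≤ m) (hS : (Set.univ : Set (Fin 2)) ∈ F cs) :
    gen cs ⟨Set.univ, hS⟩ ∈ Subgroup.center (Cactus cs) := by
  rw [Subgroup.mem_center_iff]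
  intro x
  suffices h : Commute (gen cs ⟨Set.univ, hS⟩) x from h.symm
  have hx : x ∈ Subgroup.closure (Set.range (PresentedGroup.of : F cs → Cactus cs)) := by
    rw [PresentedGroup.closure_range_of]; trivial
  induction hx using Subgroup.closure_induction with
  | mem y hy =>
    obtain ⟨X, rfl⟩ := hy
    rcases F_cases cs m hm hm4 X with h | h | h
    · exact genS_comm_gen cs m hm hme hm4 hS X (Or.inl h)
    · exact genS_comm_gen cs m hm hme hm4 hS X (Or.inr h)
    · have hXe : X = ⟨Set.univ, hS⟩ := Subtype.ext h
      rw [hXe]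
      exact Commute.refl _
  | one => exact Commute.one_right _
  | mul a b _ _ ha hb => exact ha.mul_right hb
  | inv a _ ha => exact ha.inv_right

private lemma exists_equiv (cs : CoxeterSystem M' W') (m : ℕ) (hm : M' 0 1 = m)
    (hme : Even m) (hm4 : 4 ≤ m) (h0 : ({0} : Set (Fin 2)) ∈ F cs)
    (h1 : ({1} : Set (Fin 2)) ∈ F cs) (hS : (Set.univ : Set (Fin 2)) ∈ F cs) :
    ∃ e : Cactus cs ≃* TT,
      e (gen cs ⟨Set.univ, hS⟩) = ((gg, 1) : TT) ∧
      e (gen cs ⟨{0}, h0⟩) = ((1, Monoid.Coprod.inl gg) : TT) ∧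
      e (gen cs ⟨{1}, h1⟩) = ((1, Monoid.Coprod.inr gg) : TT) := by
  set Φ : Cactus cs →* TT := PresentedGroup.toGroup (lift_rels cs m hm hme hm4) with hΦ
  have hΦgen : ∀ X : F cs, Φ (gen cs X) = fmap cs X := fun X =>
    PresentedGroup.toGroup.of (lift_rels cs m hm hme hm4)
  set ψ0 : A2 →* Cactus cs := homOfInvol (gen cs ⟨{0}, h0⟩) (gen_sq cs _) with hψ0
  set ψ1 : A2 →* Cactus cs := homOfInvol (gen cs ⟨{1}, h1⟩) (gen_sq cs _) with hψ1
  set ψS : A2 →* Cactus cs := homOfInvol (gen cs ⟨Set.univ, hS⟩) (gen_sq cs _) with hψS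
  set ψC : CP →* Cactus cs := Monoid.Coprod.lift ψ0 ψ1 with hψC
  have hcomm : ∀ a c, Commute (ψS a) (ψC c) := by
    intro a c
    rcases a2_cases a with rfl | rfl
    · rw [map_one]; exact Commute.one_left _
    · rw [hψS, homOfInvol_apply]
      exact ((Subgroup.mem_center_iff.mp (genS_central cs m hm hme hm4 hS)) (ψC c)).symm
  set Ψ : TT →* Cactus cs := MonoidHom.noncommCoprod ψS ψC hcomm with hΨ
  have hΨS : Ψ ((gg, 1) : TT) = gen cs ⟨Set.univ, hS⟩ := by
    rw [hΨ, MonoidHom.noncommCoprod_apply]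
    rw [map_one, mul_one, hψS, homOfInvol_apply]
  have hΨ0 : Ψ ((1, Monoid.Coprod.inl gg) : TT) = gen cs ⟨{0}, h0⟩ := by
    rw [hΨ, MonoidHom.noncommCoprod_apply, map_one, one_mul, hψC,
      Monoid.Coprod.lift_apply_inl, hψ0, homOfInvol_apply]
  have hΨ1 : Ψ ((1, Monoid.Coprod.inr gg) : TT) = gen cs ⟨{1}, h1⟩ := by
    rw [hΨ, MonoidHom.noncommCoprod_apply, map_one, one_mul, hψC,
      Monoid.Coprod.lift_apply_inr, hψ1, homOfInvol_apply]
  have hcomp1 : Ψ.comp Φ = MonoidHom.id (Cactus cs) := by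
    apply PresentedGroup.ext
    intro X
    rw [MonoidHom.comp_apply, MonoidHom.id_apply]
    rcases F_cases cs m hm hm4 X with h | h | h
    · have hXe : X = ⟨{0}, h0⟩ := Subtype.ext h
      show Ψ (Φ (gen cs X)) = gen cs X
      rw [hΦgen, fmap_zero cs X h, hΨ0, hXe]
    · have hXe : X = ⟨{1}, h1⟩ := Subtype.ext h
      show Ψ (Φ (gen cs X)) = gen cs X
      rw [hΦgen, fmap_one cs X h, hΨ1, hXe]
    · have hXe : X = ⟨Set.univ, hS⟩ := Subtype.ext h
      show Ψ (Φ (gen cs X)) = gen cs X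
      rw [hΦgen, fmap_univ cs X h, hΨS, hXe]
  have hΦψA : ∀ a : A2, Φ (ψS a) = ((a, 1) : TT) := by
    intro a
    rcases a2_cases a with rfl | rfl
    · rw [map_one, map_one]; rfl
    · rw [hψS, homOfInvol_apply]
      show Φ (gen cs ⟨Set.univ, hS⟩) = _
      rw [hΦgen, fmap_univ cs _ rfl]
  have hΦψC : ∀ c : CP, Φ (ψC c) = ((1, c) : TT) := by
    have : Φ.comp ψC = MonoidHom.inr A2 CP := by
      apply Monoid.Coprod.hom_ext
      · refine MonoidHom.ext fun a => ?_
        rcases a2_cases a with rfl | rfl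
        · rw [map_one, map_one]
        · rw [MonoidHom.comp_apply, MonoidHom.comp_apply, hψC,
            Monoid.Coprod.lift_apply_inl, hψ0, homOfInvol_apply]
          show Φ (gen cs ⟨{0}, h0⟩) = MonoidHom.inr A2 CP (Monoid.Coprod.inl gg)
          rw [hΦgen, fmap_zero cs _ rfl, MonoidHom.inr_apply]
      · refine MonoidHom.ext fun a => ?_
        rcases a2_cases a with rfl | rfl
        · rw [map_one, map_one]
        · rw [MonoidHom.comp_apply, MonoidHom.comp_apply, hψC,
            Monoid.Coprod.lift_apply_inr, hψ1, homOfInvol_apply]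
          show Φ (gen cs ⟨{1}, h1⟩) = MonoidHom.inr A2 CP (Monoid.Coprod.inr gg)
          rw [hΦgen, fmap_one cs _ rfl, MonoidHom.inr_apply]
    intro c
    have := congrArg (fun f => f c) this
    simpa using this
  have hcomp2 : Φ.comp Ψ = MonoidHom.id TT := by
    refine MonoidHom.ext fun p => ?_
    rw [MonoidHom.comp_apply, MonoidHom.id_apply, hΨ, MonoidHom.noncommCoprod_apply,
      map_mul, hΦψA, hΦψC, Prod.mk_mul_mk, mul_one, one_mul]
  have happ : ∀ x, (MonoidHom.toMulEquiv Φ Ψ hcomp1 hcomp2) x = Φ x := fun _ => rfl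
  refine ⟨MonoidHom.toMulEquiv Φ Ψ hcomp1 hcomp2, ?_, ?_, ?_⟩
  · rw [happ, hΦgen, fmap_univ cs _ rfl]
  · rw [happ, hΦgen, fmap_zero cs _ rfl]
  · rw [happ, hΦgen, fmap_one cs _ rfl]

end CactusI2

section TargetGroup

private lemma closure_gg : Subgroup.closure ({gg} : Set A2) = ⊤ := by
  rw [eq_top_iff]
  intro x _
  rcases a2_cases x with rfl | rfl
  · exact one_mem _
  · exact Subgroup.subset_closure rfl

private lemma closure_pair_CP :
    Subgroup.closure ({Monoid.Coprod.inl gg, Monoid.Coprod.inr gg} : Set CP) = ⊤ := by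
  rw [eq_top_iff, ← Monoid.Coprod.range_inl_sup_range_inr]
  have hinl : (Monoid.Coprod.inl : A2 →* CP).range ≤
      Subgroup.closure {Monoid.Coprod.inl gg, Monoid.Coprod.inr gg} := by
    rw [MonoidHom.range_eq_map, ← closure_gg, MonoidHom.map_closure, Set.image_singleton]
    exact Subgroup.closure_mono (by simp)
  have hinr : (Monoid.Coprod.inr : A2 →* CP).range ≤
      Subgroup.closure {Monoid.Coprod.inl gg, Monoid.Coprod.inr gg} := by
    rw [MonoidHom.range_eq_map, ← closure_gg, MonoidHom.map_closure, Set.image_singleton]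
    exact Subgroup.closure_mono (by simp)
  exact sup_le hinl hinr

private lemma closure_TT_S :
    Subgroup.closure ({((gg, 1) : TT)} : Set TT) = (MonoidHom.inl A2 CP).range := by
  rw [MonoidHom.range_eq_map, ← closure_gg, MonoidHom.map_closure, Set.image_singleton]
  rfl

private lemma closure_TT_C :
    Subgroup.closure ({((1, Monoid.Coprod.inl gg) : TT), ((1, Monoid.Coprod.inr gg) : TT)} :
      Set TT) = (MonoidHom.inr A2 CP).range := by
  rw [MonoidHom.range_eq_map, ← closure_pair_CP, MonoidHom.map_closure, Set.image_pair]
  rfl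

private lemma inf_TT : (MonoidHom.inl A2 CP).range ⊓ (MonoidHom.inr A2 CP).range = ⊥ := by
  rw [eq_bot_iff]
  rintro ⟨a, c⟩ ⟨⟨x, hx⟩, ⟨y, hy⟩⟩
  have h1 : c = 1 := (congrArg Prod.snd hx).symm
  have h2 : a = 1 := (congrArg Prod.fst hy).symm
  rw [Subgroup.mem_bot, Prod.ext_iff]
  exact ⟨h2, h1⟩

private lemma sup_TT : (MonoidHom.inl A2 CP).range ⊔ (MonoidHom.inr A2 CP).range = ⊤ := by
  rw [eq_top_iff]
  rintro ⟨a, c⟩ -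
  have h : ((a, c) : TT) = MonoidHom.inl A2 CP a * MonoidHom.inr A2 CP c := by
    rw [MonoidHom.inl_apply, MonoidHom.inr_apply, Prod.mk_mul_mk, mul_one, one_mul]
  rw [h]
  exact mul_mem (Subgroup.mem_sup_left ⟨a, rfl⟩) (Subgroup.mem_sup_right ⟨c, rfl⟩)

end TargetGroup

/-- Type `I₂(m)`, `m` even, `m ≥ 4`: `F = {{s},{t},S}`, and `C(W,S)` is the internal
direct product of `⟨c_S⟩` (of order 2) and `⟨c_{{s}}, c_{{t}}⟩ ≅ ℤ/2ℤ ∗ ℤ/2ℤ`;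
thus `C(W,S) ≅ ℤ/2ℤ × (ℤ/2ℤ ∗ ℤ/2ℤ)`. -/
theorem statement12 {W : Type*} [Group W] {M : CoxeterMatrix (Fin 2)}
    (cs : CoxeterSystem M W) (m : ℕ) (hm : M 0 1 = m) (hme : Even m) (hm4 : 4 ≤ m) :
    F cs = {{0}, {1}, (Set.univ : Set (Fin 2))} ∧
    ∃ (h0 : ({0} : Set (Fin 2)) ∈ F cs) (h1 : ({1} : Set (Fin 2)) ∈ F cs)
      (hS : (Set.univ : Set (Fin 2)) ∈ F cs),
      orderOf (gen cs ⟨Set.univ, hS⟩) = 2 ∧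
      Nonempty
        ((Subgroup.closure {gen cs ⟨{0}, h0⟩, gen cs ⟨{1}, h1⟩} : Subgroup (Cactus cs)) ≃*
          Monoid.Coprod (Multiplicative (ZMod 2)) (Multiplicative (ZMod 2))) ∧
      Subgroup.closure {gen cs ⟨Set.univ, hS⟩} ⊓
          Subgroup.closure {gen cs ⟨{0}, h0⟩, gen cs ⟨{1}, h1⟩} = ⊥ ∧
      Subgroup.closure {gen cs ⟨Set.univ, hS⟩} ⊔
          Subgroup.closure {gen cs ⟨{0}, h0⟩, gen cs ⟨{1}, h1⟩} = ⊤ ∧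
      (∀ a ∈ Subgroup.closure {gen cs ⟨Set.univ, hS⟩},
        ∀ b ∈ Subgroup.closure {gen cs ⟨{0}, h0⟩, gen cs ⟨{1}, h1⟩}, a * b = b * a) ∧
      Nonempty (Cactus cs ≃* Multiplicative (ZMod 2) ×
        Monoid.Coprod (Multiplicative (ZMod 2)) (Multiplicative (ZMod 2))) := by
  have hF := F_eq_aux cs m hm hm4
  have h0 : ({0} : Set (Fin 2)) ∈ F cs := by
    rw [hF]; exact Set.mem_insert _ _
  have h1 : ({1} : Set (Fin 2)) ∈ F cs := by
    rw [hF]; exact Set.mem_insert_of_mem _ (Set.mem_insert _ _)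
  have hS : (Set.univ : Set (Fin 2)) ∈ F cs := by
    rw [hF]; exact Set.mem_insert_of_mem _ (Set.mem_insert_of_mem _ rfl)
  obtain ⟨e, heS, he0, he1⟩ := exists_equiv cs m hm hme hm4 h0 h1 hS
  have hinj_e : Function.Injective (e : Cactus cs →* TT) := e.injective
  have hmapS : Subgroup.map (e : Cactus cs →* TT) (Subgroup.closure {gen cs ⟨Set.univ, hS⟩})
      = (MonoidHom.inl A2 CP).range := by
    rw [MonoidHom.map_closure, Set.image_singleton,
      show (e : Cactus cs →* TT) (gen cs ⟨Set.univ, hS⟩) = ((gg, 1) : TT) from heS, closure_TT_S]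
  have hmapC : Subgroup.map (e : Cactus cs →* TT) (Subgroup.closure {gen cs ⟨{0}, h0⟩, gen cs ⟨{1}, h1⟩})
      = (MonoidHom.inr A2 CP).range := by
    rw [MonoidHom.map_closure, Set.image_pair,
      show (e : Cactus cs →* TT) (gen cs ⟨{0}, h0⟩) = ((1, Monoid.Coprod.inl gg) : TT) from he0,
      show (e : Cactus cs →* TT) (gen cs ⟨{1}, h1⟩) = ((1, Monoid.Coprod.inr gg) : TT) from he1, closure_TT_C]
  refine ⟨hF, h0, h1, hS, ?_, ?_, ?_, ?_, ?_, ⟨e⟩⟩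
  · -- orderOf GS = 2
    have : Fact (Nat.Prime 2) := ⟨Nat.prime_two⟩
    apply orderOf_eq_prime
    · rw [pow_two]; exact gen_sq cs _
    · intro h
      rw [h, map_one] at heS
      exact gg_ne_one ((Prod.ext_iff.mp heS.symm).1)
  · -- closure {G0, G1} ≃* CP
    have hinj : Function.Injective (MonoidHom.inr A2 CP) :=
      fun x y hxy => congrArg Prod.snd hxy
    exact ⟨(e.subgroupMap (Subgroup.closure {gen cs ⟨{0}, h0⟩, gen cs ⟨{1}, h1⟩})).trans
      ((MulEquiv.subgroupCongr hmapC).trans (MonoidHom.ofInjective hinj).symm)⟩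
  · -- inf = ⊥
    apply Subgroup.map_injective hinj_e
    rw [Subgroup.map_inf _ _ _ hinj_e, hmapS, hmapC, inf_TT, Subgroup.map_bot]
  · -- sup = ⊤
    apply Subgroup.map_injective hinj_e
    rw [Subgroup.map_sup, hmapS, hmapC, sup_TT,
      Subgroup.map_top_of_surjective _ e.surjective]
  · -- commuting
    intro a ha b hb
    have hc : Subgroup.closure {gen cs ⟨Set.univ, hS⟩} ≤ Subgroup.center (Cactus cs) :=
      (Subgroup.closure_le _).mpr
        (Set.singleton_subset_iff.mpr (genS_central cs m hm hme hm4 hS))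
    exact ((Subgroup.mem_center_iff.mp (hc ha)) b).symm

end CactusFormal
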